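/- A Halin graph G is 3-colorable if and only if G does not contain any odd wheel W_{2k+2} (k ≥ 1) as a subgraph. -/

import Mathlib

open SimpleGraph

/-- `IsHalinFrom T G` : `G` is the Halin graph obtained from the tree `T`
(a tree with no degree-2 vertices) by joining its `r ≥ 3` leaves
`l 0, l 1, …, l (r-1)` in a cycle. -/
def IsHalinFrom {V : Type*} [Fintype V] (T G : SimpleGraph V) : Prop :=
  T.Connected ∧ T.IsAcyclic ∧ (∀ v : V, (T.neighborSet v).ncard ≠ 2) ∧
    ∃ (r : ℕ) (l : Fin r ↪ V), 3 ≤ r ∧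
      Set.range l = {v : V | (T.neighborSet v).ncard = 1} ∧
      G = T ⊔ (SimpleGraph.cycleGraph r).map l

/-- `G` is a Halin graph. -/
def IsHalin {V : Type*} [Fintype V] (G : SimpleGraph V) : Prop :=
  ∃ T : SimpleGraph V, IsHalinFrom T G

/-- The wheel graph `W_{n+1}` on `Fin (n+1)` : the cycle `C_n` on the first `n`
vertices together with the hub `Fin.last n` adjacent to all cycle vertices. -/
def wheel (n : ℕ) : SimpleGraph (Fin (n + 1)) :=
  (SimpleGraph.cycleGraph n).map Fin.castSuccEmb ⊔
    SimpleGraph.fromRel (fun u _ => u = Fin.last n)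

/-- `G` contains `H` as a subgraph (via an injective embedding of vertices). -/
def ContainsSubgraph {W V : Type*} (G : SimpleGraph V) (H : SimpleGraph W) : Prop :=
  ∃ f : W → V, Function.Injective f ∧ ∀ u v : W, H.Adj u v → G.Adj (f u) (f v)

/-!
An odd wheel is not 3-colourable: the rim is an odd cycle and may only use the two colours
missing at the hub. Conversely, let `G = T ⊔ C` where `C` is the cycle through the leaves `l i`
of the tree `T`, and let `p i` be the neighbour of `l i` in `T`, which is not itself a leaf.
Given a proper 3-colouring `c` of `T`, it remains to colour the cycle so that each `l i` avoids
`c (p i)`: a list colouring of a cycle from lists of size two, which exists unless the lists all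
agree and the cycle is odd. If the parents `p i` are not all equal, recolouring one of them in a
2-colouring of `T` with the third colour makes the lists differ. If they all equal some `q`, then
`G` is the wheel with hub `q` on the `r`-cycle, so `r` is even or `G` is an odd wheel.
-/

lemma Fin.exists_apply_castSucc_ne_apply_succ {α : Type*} {n : ℕ} (F : Fin (n + 1) → α)
    (hF : ∃ i j, F i ≠ F j) : ∃ i : Fin n, F i.castSucc ≠ F i.succ := by
  by_contra! h
  have hconst : ∀ i, F i = F 0 := by
    intro i
    induction i using Fin.induction with
    | zero => rfl
    | succ i ih => rw [← h i, ih]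
  obtain ⟨i, j, hij⟩ := hF
  exact hij (by rw [hconst i, hconst j])

namespace SimpleGraph

variable {V W : Type*}

lemma cycleGraph_adj_iff_eq_add_one {n : ℕ} {u v : Fin (n + 2)} :
    (cycleGraph (n + 2)).Adj u v ↔ u = v + 1 ∨ v = u + 1 := by
  rw [cycleGraph_adj, sub_eq_iff_eq_add, sub_eq_iff_eq_add, add_comm 1 v, add_comm 1 u]

lemma cycleGraph_adj_sub_right {n : ℕ} [NeZero n] {u v : Fin n} (c : Fin n)
    (h : (cycleGraph n).Adj u v) : (cycleGraph n).Adj (u - c) (v - c) := by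
  rwa [cycleGraph_adj', sub_sub_sub_cancel_right, sub_sub_sub_cancel_right, ← cycleGraph_adj']

lemma cycleGraph_exists_coloring_forall_ne_of_last_ne_zero {n : ℕ} (F : Fin (n + 2) → Fin 3)
    (hF : F (Fin.last (n + 1)) ≠ F 0) :
    ∃ f : (cycleGraph (n + 2)).Coloring (Fin 3), ∀ i, f i ≠ F i := by
  have : ∀ a b : Fin 3, ∃ c, c ≠ a ∧ c ≠ b := by decide
  choose pick hpick₁ hpick₂ using this
  -- greedy along `0, 1, …, last`; starting with the colour `F last` makes the closing edge
  -- `last — 0` harmless, since `f last ≠ F last`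
  let f : Fin (n + 2) → Fin 3 :=
    Fin.induction (motive := fun _ => Fin 3) (F (Fin.last (n + 1))) fun i c => pick c (F i.succ)
  have hf0 : f 0 = F (Fin.last (n + 1)) := Fin.induction_zero ..
  have hfsucc (i : Fin (n + 1)) : f i.succ = pick (f i.castSucc) (F i.succ) :=
    Fin.induction_succ ..
  have hfF (i : Fin (n + 2)) : f i ≠ F i := by
    cases i using Fin.cases with
    | zero => rw [hf0]; exact hF
    | succ i => rw [hfsucc]; exact hpick₂ _ _
  have hf_add_one (u : Fin (n + 2)) : f (u + 1) ≠ f u := by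
    cases u using Fin.lastCases with
    | last => rw [Fin.last_add_one, hf0]; exact (hfF _).symm
    | cast i => rw [Fin.coeSucc_eq_succ, hfsucc]; exact hpick₁ _ _
  refine ⟨Coloring.mk f fun {u v} h => ?_, hfF⟩
  rcases cycleGraph_adj_iff_eq_add_one.mp h with rfl | rfl
  · exact hf_add_one v
  · exact (hf_add_one u).symm

lemma cycleGraph_exists_coloring_forall_ne_of_exists_ne {n : ℕ} (F : Fin (n + 2) → Fin 3)
    (hF : ∃ i j, F i ≠ F j) : ∃ f : (cycleGraph (n + 2)).Coloring (Fin 3), ∀ i, f i ≠ F i := by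
  obtain ⟨i, hi⟩ := Fin.exists_apply_castSucc_ne_apply_succ F hF
  have hlast : Fin.last (n + 1) + i.succ = i.castSucc := by
    rw [← Fin.coeSucc_eq_succ, add_left_comm, Fin.last_add_one, add_zero]
  obtain ⟨g, hg⟩ := cycleGraph_exists_coloring_forall_ne_of_last_ne_zero
    (fun k => F (k + i.succ)) (by simpa only [hlast, zero_add] using hi)
  refine ⟨Coloring.mk (fun u => g (u - i.succ)) fun h => g.valid (cycleGraph_adj_sub_right _ h),
    fun u => ?_⟩
  show g (u - i.succ) ≠ F u
  simpa only [sub_add_cancel] using hg (u - i.succ)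

lemma cycleGraph_exists_coloring_forall_ne_of_even {r : ℕ} (F : Fin r → Fin 3)
    (hF : ∀ i j, F i = F j) (hr : Even r) :
    ∃ f : (cycleGraph r).Coloring (Fin 3), ∀ i, f i ≠ F i := by
  let b := cycleGraph.bicoloring_of_even r hr
  refine ⟨Coloring.mk (fun u => F u + if b u then 1 else 2) fun {u v} h heq => ?_, fun u => ?_⟩
  · rw [hF u v] at heq
    apply b.valid h
    have := add_left_cancel heq
    revert this
    cases b u <;> cases b v <;> decide
  · show F u + (if b u then 1 else 2) ≠ F u
    cases b u <;> simp

theorem cycleGraph_exists_coloring_forall_ne {r : ℕ} (F : Fin r → Fin 3)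
    (h : (∃ i j, F i ≠ F j) ∨ Even r) : ∃ f : (cycleGraph r).Coloring (Fin 3), ∀ i, f i ≠ F i := by
  by_cases hF : ∃ i j, F i ≠ F j
  · obtain ⟨i, j, hij⟩ := hF
    obtain ⟨n, rfl⟩ : ∃ n, r = n + 2 := ⟨r - 2, by
      have := Fin.val_ne_of_ne (ne_of_apply_ne F hij)
      omega⟩
    exact cycleGraph_exists_coloring_forall_ne_of_exists_ne F ⟨i, j, hij⟩
  · simp only [not_exists, not_not] at hF
    exact cycleGraph_exists_coloring_forall_ne_of_even F hF (h.resolve_left (by simpa using hF))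

lemma Colorable.exists_coloring_fin_three_apply_ne {G : SimpleGraph V} (hG : G.Colorable 2)
    {u w : V} (huw : u ≠ w) : ∃ c : G.Coloring (Fin 3), c u ≠ c w := by
  classical
  obtain ⟨c₀⟩ := hG
  let c : V → Fin 3 := Function.update (fun v => (c₀ v).castSucc) w (Fin.last 2)
  have hc {v : V} (hv : v ≠ w) : c v = (c₀ v).castSucc := Function.update_of_ne hv _ _
  have hcw : c w = Fin.last 2 := Function.update_self ..
  refine ⟨Coloring.mk c fun {x y} hxy => ?_, ?_⟩
  · by_cases hx : x = w <;> by_cases hy : y = w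
    · exact absurd (hx.trans hy.symm) hxy.ne
    · rw [hx, hcw, hc hy]
      exact (Fin.castSucc_ne_last _).symm
    · rw [hy, hcw, hc hx]
      exact Fin.castSucc_ne_last _
    · rw [hc hx, hc hy]
      exact Fin.castSucc_injective _ |>.ne (c₀.valid hxy)
  · show c u ≠ c w
    rw [hc huw, hcw]
    exact Fin.castSucc_ne_last _

lemma colorable_sup_map_of_coloring {T : SimpleGraph V} {H : SimpleGraph W} {n : ℕ} (l : W ↪ V)
    (c : T.Coloring (Fin n)) (f : H.Coloring (Fin n))
    (hl : ∀ w v, T.Adj (l w) v → v ∉ Set.range l ∧ f w ≠ c v) :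
    (T ⊔ H.map l).Colorable n := by
  let C := Function.extend l f c
  have hCl (w : W) : C (l w) = f w := l.injective.extend_apply _ _ _
  have hC {v : V} (hv : v ∉ Set.range l) : C v = c v := Function.extend_apply' _ _ _ hv
  refine ⟨Coloring.mk C fun {u v} huv => ?_⟩
  rcases huv with hT | hH
  · by_cases hu : u ∈ Set.range l
    · obtain ⟨w, rfl⟩ := hu
      obtain ⟨hv, hne⟩ := hl w v hT
      rw [hCl, hC hv]
      exact hne
    by_cases hv : v ∈ Set.range l
    · obtain ⟨w, rfl⟩ := hv
      obtain ⟨hu, hne⟩ := hl w u hT.symm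
      rw [hCl, hC hu]
      exact hne.symm
    rw [hC hu, hC hv]
    exact c.valid hT
  · obtain ⟨a, b, hab, rfl, rfl⟩ := (map_adj _ _ _ _).mp hH
    rw [hCl, hCl]
    exact f.valid hab

lemma Connected.mem_pair_of_neighborSet_eq {T : SimpleGraph V} (hT : T.Connected) {u v : V}
    (hu : T.neighborSet u = {v}) (hv : T.neighborSet v = {u}) (x : V) : x = u ∨ x = v := by
  suffices ∀ a b, T.Walk a b → a = u ∨ a = v → b = u ∨ b = v from
    this u x (hT.preconnected u x).some (Or.inl rfl)
  intro a b p
  induction p with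
  | nil => exact id
  | cons h _ ih =>
    have hy : _ ∈ T.neighborSet _ := h
    rintro (rfl | rfl)
    · rw [hu] at hy
      exact ih (Or.inr hy)
    · rw [hv] at hy
      exact ih (Or.inl hy)

lemma Connected.exists_adj_iff_notMem_range {T : SimpleGraph V} (hT : T.Connected) {r : ℕ}
    (hr : 3 ≤ r) (l : Fin r ↪ V) (hl : ∀ i, (T.neighborSet (l i)).ncard = 1) :
    ∃ p : Fin r → V, (∀ i v, T.Adj (l i) v ↔ v = p i) ∧ ∀ i, p i ∉ Set.range l := by
  choose p hp using fun i => Set.ncard_eq_one.mp (hl i)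
  refine ⟨p, fun i v => by rw [← mem_neighborSet, hp i, Set.mem_singleton_iff], ?_⟩
  rintro i ⟨j, hj⟩
  -- two adjacent leaves would make up the whole tree, which has at least `r ≥ 3` vertices
  have hli : T.neighborSet (l i) = {l j} := hj ▸ hp i
  have hlj : T.neighborSet (l j) = {l i} := by
    have : l i ∈ T.neighborSet (l j) := T.adj_symm (by rw [← mem_neighborSet, hli]; rfl)
    rw [hp j] at this ⊢
    rw [this]
  have hsub : (Finset.univ : Finset (Fin r)) ⊆ {i, j} := fun k _ => by
    simpa [l.injective.eq_iff] using hT.mem_pair_of_neighborSet_eq hli hlj (l k)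
  have := (Finset.card_le_card hsub).trans Finset.card_le_two
  rw [Finset.card_univ, Fintype.card_fin] at this
  omega

lemma colorable_sup_cycleGraph {T : SimpleGraph V} {r : ℕ} {l : Fin r ↪ V} {p : Fin r → V}
    (hp : ∀ i v, T.Adj (l i) v ↔ v = p i) (hpl : ∀ i, p i ∉ Set.range l)
    (c : T.Coloring (Fin 3)) (h : (∃ i j, c (p i) ≠ c (p j)) ∨ Even r) :
    (T ⊔ (cycleGraph r).map l).Colorable 3 := by
  obtain ⟨f, hf⟩ := cycleGraph_exists_coloring_forall_ne (fun i => c (p i)) h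
  refine colorable_sup_map_of_coloring l c f fun i v hv => ?_
  obtain rfl := (hp i v).mp hv
  exact ⟨hpl i, hf i⟩

end SimpleGraph

lemma ContainsSubgraph.colorable {V W : Type*} {G : SimpleGraph V} {H : SimpleGraph W}
    (h : ContainsSubgraph G H) {n : ℕ} (hG : G.Colorable n) : H.Colorable n :=
  let ⟨f, _, hf⟩ := h
  hG.of_hom ⟨f, hf _ _⟩

lemma wheel_adj_castSucc {n : ℕ} {i j : Fin n} (h : (cycleGraph n).Adj i j) :
    (wheel n).Adj i.castSucc j.castSucc :=
  Or.inl <| (map_adj _ _ _ _).mpr ⟨i, j, h, rfl, rfl⟩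

lemma wheel_adj_last {n : ℕ} (i : Fin n) : (wheel n).Adj i.castSucc (Fin.last n) :=
  Or.inr ⟨Fin.castSucc_ne_last i, Or.inr rfl⟩

lemma wheel_not_colorable_three {n : ℕ} (hn : 2 ≤ n) (hodd : Odd n) :
    ¬ (wheel n).Colorable 3 := by
  rintro ⟨C⟩
  let rim : (cycleGraph n).Coloring {x : Fin 3 // x ≠ C (Fin.last n)} :=
    Coloring.mk (fun i => ⟨C i.castSucc, C.valid (wheel_adj_last i)⟩)
      fun h heq => C.valid (wheel_adj_castSucc h) (congrArg Subtype.val heq)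
  have hrim : (cycleGraph n).Colorable 2 := by simpa using rim.colorable
  have := hrim.chromaticNumber_le
  rw [chromaticNumber_cycleGraph_of_odd n hn hodd] at this
  norm_num at this

lemma containsSubgraph_wheel {V : Type*} {T : SimpleGraph V} {r : ℕ} (l : Fin r ↪ V) {q : V}
    (hq : q ∉ Set.range l) (hadj : ∀ i, T.Adj (l i) q) :
    ContainsSubgraph (T ⊔ (cycleGraph r).map l) (wheel r) := by
  refine ⟨Fin.lastCases q l, fun u v huv => ?_, fun u v huv => ?_⟩
  · cases u using Fin.lastCases <;> cases v using Fin.lastCases <;>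
      simp only [Fin.lastCases_last, Fin.lastCases_castSucc] at huv
    · rfl
    · exact absurd ⟨_, huv.symm⟩ hq
    · exact absurd ⟨_, huv⟩ hq
    · rw [l.injective huv]
  rcases huv with hrim | ⟨hne, rfl | rfl⟩
  · obtain ⟨i, j, hij, rfl, rfl⟩ := (map_adj _ _ _ _).mp hrim
    simp only [Fin.castSuccEmb_apply, Fin.lastCases_castSucc]
    exact Or.inr ((map_adj _ _ _ _).mpr ⟨i, j, hij, rfl, rfl⟩)
  · cases v using Fin.lastCases with
    | last => exact absurd rfl hne
    | cast j =>
      simp only [Fin.lastCases_last, Fin.lastCases_castSucc]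
      exact Or.inl (hadj j).symm
  · cases u using Fin.lastCases with
    | last => exact absurd rfl hne
    | cast i =>
      simp only [Fin.lastCases_last, Fin.lastCases_castSucc]
      exact Or.inl (hadj i)

/-- A Halin graph is 3-colorable iff it contains no odd wheel `W_{2k+2}`
(`k ≥ 1`) as a subgraph. -/
theorem halin_three_colorable_iff_no_odd_wheel {V : Type*} [Fintype V]
    (G : SimpleGraph V) (hG : IsHalin G) :
    G.Colorable 3 ↔ ¬ ∃ k : ℕ, 1 ≤ k ∧ ContainsSubgraph G (wheel (2 * k + 1)) := by
  refine ⟨fun hG3 ⟨k, hk, hW⟩ =>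
    wheel_not_colorable_three (by omega) (odd_two_mul_add_one k) (hW.colorable hG3), fun hno => ?_⟩
  obtain ⟨T, hconn, hacyc, -, r, l, hr, hleaves, rfl⟩ := hG
  obtain ⟨p, hp, hpl⟩ := hconn.exists_adj_iff_notMem_range hr l fun i =>
    (hleaves ▸ Set.mem_range_self i : l i ∈ {v | (T.neighborSet v).ncard = 1})
  by_cases hstar : ∃ i j, p i ≠ p j
  · obtain ⟨i, j, hij⟩ := hstar
    obtain ⟨c, hc⟩ := hacyc.colorable_two.exists_coloring_fin_three_apply_ne hij
    exact colorable_sup_cycleGraph hp hpl c (Or.inl ⟨i, j, hc⟩)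
  simp only [not_exists, not_not] at hstar
  obtain heven | ⟨k, rfl⟩ := Nat.even_or_odd r
  · exact colorable_sup_cycleGraph hp hpl (hacyc.colorable_two.mono (by norm_num)).some
      (Or.inr heven)
  · refine absurd ⟨k, by omega, containsSubgraph_wheel l (hpl 0) fun i => ?_⟩ hno
    exact (hp i _).mpr (hstar 0 i)
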